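/- Let (X, B, μ, T) be a measure-preserving dynamical system on a probability space, and assume that T is weakly mixing with respect to μ. Let A ⊆ ℕ have positive upper density, and let V ⊆ X be a measurable set with μ(V) > 0. Then for μ-almost every x ∈ X, the set A ∩ {n ∈ ℕ : Tⁿx ∈ V} has positive upper density. -/

import Mathlib

open Filter Topology Set MeasureTheory
open scoped Classical

/-- The upper density of a set `A ⊆ ℕ`: `limsup_{N→∞} #(A ∩ [1,N]) / N`. -/
noncomputable def upperDensity (A : Set ℕ) : ℝ :=
  Filter.atTop.limsup fun N : ℕ => (((Finset.Icc 1 N).filter (· ∈ A)).card : ℝ) / N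

/-- `T` is weakly mixing with respect to `μ`: for all measurable sets `A`, `B`,
`(1/N) Σ_{n<N} |μ(A ∩ T^{-n}B) − μ(A)μ(B)| → 0`. -/
def WeaklyMixingWrt {X : Type*} [MeasurableSpace X] (T : X → X) (μ : Measure X) : Prop :=
  ∀ A B : Set X, MeasurableSet A → MeasurableSet B →
    Tendsto (fun N : ℕ =>
      (∑ n ∈ Finset.range N,
        |(μ (A ∩ T^[n] ⁻¹' B)).toReal - (μ A).toReal * (μ B).toReal|) / N)
      atTop (nhds 0)

open scoped Finset
open ProbabilityTheory

/-!
Let `e_N(x) = #(A ∩ [1, N] ∩ {n : Tⁿ x ∈ V}) / N`. Its mean is `μ(V) · #(A ∩ [1, N]) / N`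
and its variance is `N⁻²` times the sum of the correlations `μ(V ∩ T^{-|m - n|} V) - μ(V)²`
over `m, n ∈ A ∩ [1, N]`. Each difference `|m - n| = k < N` occurs at most `2N` times, so
weak mixing makes the variance tend to `0`. Let `d > 0` be the upper density of `A`. Along
the `N` with `#(A ∩ [1, N]) > d N / 2`, Chebyshev's inequality gives convergence in measure
of `e_N` minus its mean to `0`, hence a.e. convergence along a further subsequence; so for
a.e. `x`, `e_N(x) ≥ μ(V) d / 4` for infinitely many `N`.
-/

theorem Nat.sum_Icc_comp_dist_le {b : ℕ → ℝ} (hb : ∀ k, 0 ≤ b k) {m N : ℕ}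
    (hm : m ∈ Finset.Icc 1 N) :
    ∑ n ∈ Finset.Icc 1 N, b (Nat.dist m n) ≤ 2 * ∑ k ∈ Finset.range N, b k := by
  have hfiber : ∀ k, #{n ∈ Finset.Icc 1 N | Nat.dist m n = k} ≤ 2 := fun k ↦ by
    refine (Finset.card_le_card fun n hn ↦ ?_).trans
      (Finset.card_le_two (a := m - k) (b := m + k))
    rw [Finset.mem_filter, Finset.mem_Icc] at hn; unfold Nat.dist at hn
    simp only [Finset.mem_insert, Finset.mem_singleton]
    omega
  have hrange : (Finset.Icc 1 N).image (Nat.dist m) ⊆ Finset.range N := fun k hk ↦ by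
    simp only [Finset.mem_image, Finset.mem_Icc, Nat.dist] at hk hm
    simp only [Finset.mem_range]
    omega
  rw [Finset.sum_comp, Finset.mul_sum]
  calc ∑ k ∈ (Finset.Icc 1 N).image (Nat.dist m),
        #{n ∈ Finset.Icc 1 N | Nat.dist m n = k} • b k
      ≤ ∑ k ∈ (Finset.Icc 1 N).image (Nat.dist m), 2 * b k := Finset.sum_le_sum fun k _ ↦ by
        rw [nsmul_eq_mul]; gcongr; exacts [hb k, mod_cast hfiber k]
    _ ≤ ∑ k ∈ Finset.range N, 2 * b k :=
        Finset.sum_le_sum_of_subset_of_nonneg hrange fun k _ _ ↦ mul_nonneg zero_le_two (hb k)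

theorem Nat.sum_sum_comp_dist_le {I : Finset ℕ} {N : ℕ} (hI : I ⊆ Finset.Icc 1 N) (f : ℕ → ℝ) :
    ∑ m ∈ I, ∑ n ∈ I, f (Nat.dist m n) ≤ 2 * N * ∑ k ∈ Finset.range N, |f k| := by
  have hb : ∀ k, 0 ≤ |f k| := fun k ↦ abs_nonneg _
  calc ∑ m ∈ I, ∑ n ∈ I, f (Nat.dist m n)
      ≤ ∑ m ∈ I, ∑ n ∈ Finset.Icc 1 N, |f (Nat.dist m n)| := Finset.sum_le_sum fun m _ ↦
        (Finset.sum_le_sum fun n _ ↦ le_abs_self _).trans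
          (Finset.sum_le_sum_of_subset_of_nonneg hI fun n _ _ ↦ hb _)
    _ ≤ ∑ m ∈ Finset.Icc 1 N, ∑ n ∈ Finset.Icc 1 N, |f (Nat.dist m n)| :=
        Finset.sum_le_sum_of_subset_of_nonneg hI fun m _ _ ↦ Finset.sum_nonneg fun n _ ↦ hb _
    _ ≤ ∑ m ∈ Finset.Icc 1 N, 2 * ∑ k ∈ Finset.range N, |f k| :=
        Finset.sum_le_sum fun m hm ↦ Nat.sum_Icc_comp_dist_le hb hm
    _ = 2 * N * ∑ k ∈ Finset.range N, |f k| := by simp; ring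

noncomputable def densityUpTo (A : Set ℕ) (N : ℕ) : ℝ :=
  (((Finset.Icc 1 N).filter (· ∈ A)).card : ℝ) / N

theorem densityUpTo_nonneg (A : Set ℕ) (N : ℕ) : 0 ≤ densityUpTo A N := by
  unfold densityUpTo; positivity

theorem densityUpTo_le_one (A : Set ℕ) (N : ℕ) : densityUpTo A N ≤ 1 := by
  refine div_le_one_of_le₀ ?_ N.cast_nonneg
  exact_mod_cast (Finset.card_filter_le _ _).trans (Nat.card_Icc 1 N).le

theorem le_upperDensity_of_frequently {A : Set ℕ} {δ : ℝ}
    (h : ∃ᶠ N in atTop, δ ≤ densityUpTo A N) : δ ≤ upperDensity A :=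
  le_limsup_of_frequently_le h ⟨1, eventually_map.2 (.of_forall (densityUpTo_le_one A))⟩

theorem frequently_lt_densityUpTo {A : Set ℕ} {δ : ℝ} (h : δ < upperDensity A) :
    ∃ᶠ N in atTop, δ < densityUpTo A N :=
  frequently_lt_of_lt_limsup
    (isBoundedUnder_of_eventually_ge (.of_forall (densityUpTo_nonneg A))).isCoboundedUnder_le h

theorem ProbabilityTheory.tendstoInMeasure_sub_integral_of_tendsto_variance
    {Ω ι : Type*} [MeasurableSpace Ω] {μ : Measure Ω} [IsFiniteMeasure μ] {l : Filter ι}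
    {Y : ι → Ω → ℝ} (hY : ∀ i, MemLp (Y i) 2 μ) (hvar : Tendsto (fun i ↦ Var[Y i; μ]) l (𝓝 0)) :
    TendstoInMeasure μ (fun i ω ↦ Y i ω - μ[Y i]) l 0 := by
  refine tendstoInMeasure_iff_dist.2 fun ε hε ↦ ?_
  have hbound : Tendsto (fun i ↦ ENNReal.ofReal (Var[Y i; μ] / ε ^ 2)) l (𝓝 0) := by
    simpa using ENNReal.tendsto_ofReal (hvar.div_const (ε ^ 2))
  refine tendsto_of_tendsto_of_tendsto_of_le_of_le tendsto_const_nhds hbound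
    (fun _ ↦ zero_le) fun i ↦ ?_
  simpa [Real.dist_eq] using meas_ge_le_variance_div_sq (hY i) hε

theorem ProbabilityTheory.covariance_indicator_one {Ω : Type*} [MeasurableSpace Ω]
    {μ : Measure Ω} [IsProbabilityMeasure μ] {B C : Set Ω} (hB : MeasurableSet B)
    (hC : MeasurableSet C) :
    cov[B.indicator 1, C.indicator 1; μ] = μ.real (B ∩ C) - μ.real B * μ.real C := by
  have hLp : ∀ {D : Set Ω}, MeasurableSet D → MemLp (D.indicator (1 : Ω → ℝ)) 2 μ :=
    fun hD ↦ memLp_indicator_const 2 hD 1 (.inr (measure_ne_top μ _))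
  rw [covariance_eq_sub (hLp hB) (hLp hC), ← Set.inter_indicator_one,
    integral_indicator_one (hB.inter hC), integral_indicator_one hB, integral_indicator_one hC]

theorem MeasureTheory.MeasurePreserving.measure_preimage_iterate_inter_preimage_iterate
    {X : Type*} [MeasurableSpace X] {μ : Measure X} {T : X → X} (hT : MeasurePreserving T μ μ)
    {V : Set X} (hV : MeasurableSet V) (m n : ℕ) :
    μ (T^[m] ⁻¹' V ∩ T^[n] ⁻¹' V) = μ (V ∩ T^[Nat.dist m n] ⁻¹' V) := by
  wlog hmn : m ≤ n generalizing m n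
  · rw [Set.inter_comm, Nat.dist_comm, this n m (le_of_not_ge hmn)]
  obtain ⟨k, rfl⟩ := Nat.exists_eq_add_of_le hmn
  have hpre : T^[m] ⁻¹' V ∩ T^[m + k] ⁻¹' V = T^[m] ⁻¹' (V ∩ T^[k] ⁻¹' V) := by
    rw [add_comm, Function.iterate_add, Set.preimage_comp, Set.preimage_inter]
  rw [hpre, (hT.iterate m).measure_preimage
    (hV.inter (hT.measurable.iterate k hV)).nullMeasurableSet]
  simp [Nat.dist]

section Visits

variable {X : Type*}

noncomputable def visitCount (T : X → X) (V : Set X) (I : Finset ℕ) (x : X) : ℝ :=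
  ∑ n ∈ I, (T^[n] ⁻¹' V).indicator 1 x

theorem densityUpTo_inter_visits (A : Set ℕ) (T : X → X) (V : Set X) (x : X) (N : ℕ) :
    densityUpTo (A ∩ {n | T^[n] x ∈ V}) N =
      visitCount T V ((Finset.Icc 1 N).filter (· ∈ A)) x / N := by
  simp only [densityUpTo, visitCount, Finset.natCast_card_filter, Finset.sum_filter]
  congr 1
  refine Finset.sum_congr rfl fun n _ ↦ ?_
  by_cases hn : n ∈ A <;> simp [hn, Set.indicator_apply]

variable [MeasurableSpace X] {μ : Measure X} {T : X → X} {V : Set X}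

theorem memLp_indicator_preimage_iterate [IsFiniteMeasure μ] (hT : Measurable T)
    (hV : MeasurableSet V) (n : ℕ) :
    MemLp ((T^[n] ⁻¹' V).indicator (1 : X → ℝ)) 2 μ :=
  memLp_indicator_const 2 (hT.iterate n hV) 1 (.inr (measure_ne_top μ _))

theorem memLp_visitCount [IsFiniteMeasure μ] (hT : Measurable T) (hV : MeasurableSet V)
    (I : Finset ℕ) :
    MemLp (visitCount T V I) 2 μ :=
  memLp_finsetSum I fun n _ ↦ memLp_indicator_preimage_iterate hT hV n

theorem integral_visitCount [IsProbabilityMeasure μ] (hT : MeasurePreserving T μ μ)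
    (hV : MeasurableSet V) (I : Finset ℕ) : μ[visitCount T V I] = #I * μ.real V := by
  unfold visitCount
  rw [integral_finsetSum I fun n _ ↦
    (memLp_indicator_preimage_iterate hT.measurable hV n).integrable one_le_two]
  simp_rw [integral_indicator_one (hT.measurable.iterate _ hV),
    (hT.iterate _).measureReal_preimage hV.nullMeasurableSet]
  simp

theorem variance_visitCount [IsProbabilityMeasure μ] (hT : MeasurePreserving T μ μ)
    (hV : MeasurableSet V) (I : Finset ℕ) :
    Var[visitCount T V I; μ] =
      ∑ m ∈ I, ∑ n ∈ I, (μ.real (V ∩ T^[Nat.dist m n] ⁻¹' V) - μ.real V * μ.real V) := by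
  unfold visitCount
  rw [variance_fun_sum' fun n _ ↦ memLp_indicator_preimage_iterate hT.measurable hV n]
  refine Finset.sum_congr rfl fun m _ ↦ Finset.sum_congr rfl fun n _ ↦ ?_
  rw [covariance_indicator_one (hT.measurable.iterate m hV) (hT.measurable.iterate n hV),
    (hT.iterate m).measureReal_preimage hV.nullMeasurableSet,
    (hT.iterate n).measureReal_preimage hV.nullMeasurableSet, measureReal_def,
    hT.measure_preimage_iterate_inter_preimage_iterate hV, ← measureReal_def]

theorem variance_visitCount_div_le [IsProbabilityMeasure μ] (hT : MeasurePreserving T μ μ)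
    (hV : MeasurableSet V) {I : Finset ℕ} {N : ℕ} (hI : I ⊆ Finset.Icc 1 N) :
    Var[fun x ↦ visitCount T V I x / N; μ] ≤
      2 * ((∑ k ∈ Finset.range N, |μ.real (V ∩ T^[k] ⁻¹' V) - μ.real V * μ.real V|) / N) := by
  simp_rw [div_eq_mul_inv, variance_mul_const, variance_visitCount hT hV]
  calc _ ≤ 2 * N * (∑ k ∈ Finset.range N, |μ.real (V ∩ T^[k] ⁻¹' V) - μ.real V * μ.real V|)
        * (N : ℝ)⁻¹ ^ 2 := by
        gcongr
        exact Nat.sum_sum_comp_dist_le hI fun k ↦ μ.real (V ∩ T^[k] ⁻¹' V) - μ.real V * μ.real V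
    _ = _ := by
      rcases N.eq_zero_or_pos with rfl | hN
      · simp
      · field_simp

end Visits

/-- If `T` is a weakly mixing measure-preserving transformation of a probability space,
`A ⊆ ℕ` has positive upper density and `V` is measurable with `μ(V) > 0`, then for
`μ`-almost every `x`, the set `A ∩ {n : Tⁿx ∈ V}` has positive upper density. -/
theorem upperDensity_visits_pos_ae
    {X : Type*} [MeasurableSpace X] (μ : Measure X) [IsProbabilityMeasure μ]
    (T : X → X) (hT : MeasurePreserving T μ μ) (hwm : WeaklyMixingWrt T μ)
    (A : Set ℕ) (hA : 0 < upperDensity A)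
    (V : Set X) (hV : MeasurableSet V) (hVpos : 0 < μ V) :
    ∀ᵐ x ∂μ, 0 < upperDensity (A ∩ {n : ℕ | T^[n] x ∈ V}) := by
  set c := μ.real V
  have hc : 0 < c := ENNReal.toReal_pos hVpos.ne' (measure_ne_top μ V)
  set d := upperDensity A
  let e : ℕ → X → ℝ := fun N x ↦ visitCount T V ((Finset.Icc 1 N).filter (· ∈ A)) x / N
  have he_mean : ∀ N, μ[e N] = c * densityUpTo A N := fun N ↦ by
    rw [integral_div, integral_visitCount hT hV, densityUpTo]; ring
  have hvar : Tendsto (fun N ↦ Var[e N; μ]) atTop (𝓝 0) :=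
    squeeze_zero (fun N ↦ variance_nonneg _ _)
      (fun N ↦ variance_visitCount_div_le hT hV (Finset.filter_subset _ _))
      (by simpa [measureReal_def] using (hwm V V hV hV).const_mul 2)
  obtain ⟨φ, hφ, hφA⟩ :=
    extraction_of_frequently_atTop (frequently_lt_densityUpTo (half_lt_self hA))
  obtain ⟨ψ, hψ, hae⟩ := (tendstoInMeasure_sub_integral_of_tendsto_variance
    (fun j ↦ by
      simpa only [e, div_eq_mul_inv] using (memLp_visitCount hT.measurable hV _).mul_const _)
    (hvar.comp hφ.tendsto_atTop)).exists_seq_tendsto_ae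
  filter_upwards [hae] with x hx
  refine (by positivity : 0 < c * d / 4).trans_le (le_upperDensity_of_frequently ?_)
  refine (hφ.comp hψ).tendsto_atTop.frequently (Eventually.frequently ?_)
  have hneg : -(c * d / 4) < (0 : X → ℝ) x := neg_lt_zero.2 (by positivity)
  filter_upwards [hx.eventually (lt_mem_nhds hneg)] with j hj
  have hdens := hφA (ψ j)
  simp only [he_mean] at hj
  rw [Function.comp_apply, densityUpTo_inter_visits]
  nlinarith
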